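/- arXiv:1012.2752 — 2 statements merged into one kernel-verified Lean document; each statement's English description precedes it below -/
import Mathlib

section
/- Let q : ℝ → ℝ be twice continuously differentiable and p : ℝ → ℝ continuously differentiable. For x, s ∈ ℝ define the 2×2 complex matrices L(x,s) with rows (−4ix^2 − i(s + 2q(s)^2), 4x q(s) + 2i p(s)) and (4x q(s) − 2i p(s), 4ix^2 + i(s + 2q(s)^2)), and M(x,s) with rows (−ix, q(s)) and (q(s), ix). Then the zero-curvature equation ∂_s L(x,s) − ∂_x M(x,s) + L(x,s)·M(x,s) − M(x,s)·L(x,s) = 0 holds for all x, s ∈ ℝ if and only if p(s) = q'(s) and q''(s) = 2 q(s)^3 + s q(s) for all s ∈ ℝ. -/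
/-!
An entrywise computation shows that, with `a = p − q'` and `b = p' − (2q³ + sq)`,
`∂ₛL − ∂ₓM + [L, M]` equals
`[[4i q a, −4x a + 2i b], [−4x a − 2i b, −4i q a]]`, which is affine in `x`. It vanishes for
every `x` iff `a = b = 0` (read off the `(0,1)` entry at `x = 0` and `x = 1`), and once `p = q'`
the equation `p' = 2q³ + sq` is Painlevé II.
-/

open Matrix Complex Topology

/-- The Lax matrix `L(x,s)` of the Painlevé II system. -/
noncomputable def LaxL (q p : ℝ → ℝ) (x s : ℝ) : Matrix (Fin 2) (Fin 2) ℂ :=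
  !![-4 * I * (x : ℂ) ^ 2 - I * ((s : ℂ) + 2 * (q s : ℂ) ^ 2),
      4 * (x : ℂ) * (q s : ℂ) + 2 * I * (p s : ℂ);
     4 * (x : ℂ) * (q s : ℂ) - 2 * I * (p s : ℂ),
      4 * I * (x : ℂ) ^ 2 + I * ((s : ℂ) + 2 * (q s : ℂ) ^ 2)]

/-- The Lax matrix `M(x,s)` of the Painlevé II system. -/
noncomputable def LaxM (q : ℝ → ℝ) (x s : ℝ) : Matrix (Fin 2) (Fin 2) ℂ :=
  !![-I * (x : ℂ), (q s : ℂ); (q s : ℂ), I * (x : ℂ)]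

noncomputable def laxResidual (c a b x : ℝ) : Matrix (Fin 2) (Fin 2) ℂ :=
  !![4 * I * c * a, -4 * x * a + 2 * I * b; -4 * x * a - 2 * I * b, -(4 * I * c * a)]

theorem forall_laxResidual_eq_zero_iff (c a b : ℝ) :
    (∀ x, laxResidual c a b x = 0) ↔ a = 0 ∧ b = 0 := by
  constructor
  · intro h
    have hb : b = 0 := by simpa [laxResidual] using congrFun₂ (h 0) 0 1
    have ha : a = 0 := by simpa [laxResidual, hb] using congrFun₂ (h 1) 0 1
    exact ⟨ha, hb⟩
  · rintro ⟨rfl, rfl⟩ x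
    ext i j
    fin_cases i <;> fin_cases j <;> simp [laxResidual]

theorem deriv_laxM (q : ℝ → ℝ) (x s : ℝ) :
    Matrix.of (fun i j => deriv (fun x' => LaxM q x' s i j) x) = !![-I, 0; 0, I] := by
  ext i j
  fin_cases i <;> fin_cases j <;> simp [LaxM]
  all_goals exact ((hasDerivAt_id x).ofReal_comp).deriv

theorem laxL_mul_laxM_sub (q p : ℝ → ℝ) (x s : ℝ) :
    LaxL q p x s * LaxM q x s - LaxM q x s * LaxL q p x s =
      !![4 * I * p s * q s, -4 * x * p s - 2 * I * (2 * q s ^ 3 + s * q s);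
        -4 * x * p s + 2 * I * (2 * q s ^ 3 + s * q s), -(4 * I * p s * q s)] := by
  ext i j
  fin_cases i <;> fin_cases j <;> simp [LaxL, LaxM] <;> ring_nf <;> simp only [I_sq] <;> ring

section

variable {q p : ℝ → ℝ} {s : ℝ}

theorem deriv_laxL (hq : DifferentiableAt ℝ q s) (hp : DifferentiableAt ℝ p s) (x : ℝ) :
    Matrix.of (fun i j => deriv (fun s' => LaxL q p x s' i j) s) =
      !![-I * (1 + 4 * q s * deriv q s), 4 * x * deriv q s + 2 * I * deriv p s;
        4 * x * deriv q s - 2 * I * deriv p s, I * (1 + 4 * q s * deriv q s)] := by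
  have hQ := hq.hasDerivAt.ofReal_comp
  have hP := hp.hasDerivAt.ofReal_comp
  have hS : HasDerivAt (fun t : ℝ => (t : ℂ)) 1 s := (hasDerivAt_id s).ofReal_comp
  ext i j
  fin_cases i <;> fin_cases j <;> simp [LaxL]
  · exact (hS.add ((hQ.fun_pow 2).const_mul 2)).deriv.trans (by push_cast; ring)
  · exact ((hQ.const_mul _).add (hP.const_mul _)).deriv
  · exact ((hQ.const_mul _).sub (hP.const_mul _)).deriv
  · exact (hS.add ((hQ.fun_pow 2).const_mul 2)).deriv.trans (by push_cast; ring)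

theorem laxCurvature_eq (hq : DifferentiableAt ℝ q s) (hp : DifferentiableAt ℝ p s) (x : ℝ) :
    (Matrix.of fun i j =>
        deriv (fun s' => LaxL q p x s' i j) s - deriv (fun x' => LaxM q x' s i j) x) +
      (LaxL q p x s * LaxM q x s - LaxM q x s * LaxL q p x s) =
    laxResidual (q s) (p s - deriv q s) (deriv p s - (2 * q s ^ 3 + s * q s)) x := by
  ext i j
  have hL := congrFun₂ (deriv_laxL hq hp x) i j
  have hM := congrFun₂ (deriv_laxM q x s) i j
  have hC := congrFun₂ (laxL_mul_laxM_sub q p x s) i j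
  rw [of_apply] at hL hM
  rw [Matrix.add_apply, hC, of_apply, hL, hM]
  fin_cases i <;> fin_cases j <;> simp [laxResidual] <;> ring

end

/-- The zero-curvature equation `∂_s L − ∂_x M + [L,M] = 0` holds for all `x, s`
iff `p = q'` and `q` solves Painlevé II: `q'' = 2q³ + sq`. -/
theorem painleveII_zero_curvature (q p : ℝ → ℝ)
    (hq : ContDiff ℝ 2 q) (hp : ContDiff ℝ 1 p) :
    (∀ x s : ℝ,
        (Matrix.of fun i j =>
            deriv (fun s' => LaxL q p x s' i j) s - deriv (fun x' => LaxM q x' s i j) x) +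
          (LaxL q p x s * LaxM q x s - LaxM q x s * LaxL q p x s) = 0) ↔
      (∀ s : ℝ, p s = deriv q s ∧ deriv (deriv q) s = 2 * q s ^ 3 + s * q s) := by
  have hqd := hq.differentiable two_ne_zero
  have hpd := hp.differentiable one_ne_zero
  rw [forall_comm]
  simp only [laxCurvature_eq (hqd _) (hpd _), forall_laxResidual_eq_zero_iff, sub_eq_zero]
  constructor <;> intro h <;> obtain rfl : p = deriv q := funext fun s => (h s).1 <;> exact h
end

section
/- Let ψ, φ, ψ̄, φ̄ : ℝ → ℂ be twice continuously differentiable with ψ(x)φ̄(x) − ψ̄(x)φ(x) = 1 for all x ∈ ℝ, and define K(x₁,x₂) = (ψ(x₁)φ̄(x₂) − ψ̄(x₁)φ(x₂))/(x₁ − x₂) for x₁ ≠ x₂. Then for every x₁ ∈ ℝ, the limit lim_{x₂→x₁} ( −K(x₁,x₂)·K(x₂,x₁) − 1/(x₁ − x₂)^2 ) exists (is a finite complex number). -/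
/-!
Writing `F x = ψ x₁ φ̄ x − ψ̄ x₁ φ x` and `G x = ψ x φ̄ x₁ − ψ̄ x φ x₁` for the numerators of
`K(x₁, x)` and `K(x, x₁)`, we get `W₂(x₁, x) = (F x G x − 1) / (x − x₁)²`. The numerator vanishes
at `x₁` because `F x₁ = G x₁ = det Ψ(x₁) = 1`, and so does its derivative, which there equals
`F' x₁ + G' x₁ = (det Ψ)'(x₁) = 0`. For a function `f` vanishing to first order at `a` and twice
differentiable there, `f x − f''(a) (x − a)² / 2` has derivative `o(x − a)`, hence is itself
`o((x − a)²)` by the mean value inequality; so the quotient tends to `f''(x₁) / 2`.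
-/

open Filter Topology Set

theorem tendsto_inv_sq_smul_of_deriv_eq_zero {E : Type*} [NormedAddCommGroup E]
    [NormedSpace ℝ E] {f : ℝ → E} {a : ℝ} (hf : Differentiable ℝ f)
    (hf' : DifferentiableAt ℝ (deriv f) a) (h0 : f a = 0) (h1 : deriv f a = 0) :
    Tendsto (fun x => ((x - a) ^ 2)⁻¹ • f x) (𝓝[≠] a)
      (𝓝 ((2 : ℝ)⁻¹ • deriv (deriv f) a)) := by
  set c := deriv (deriv f) a
  set g := fun x => f x - ((x - a) ^ 2 / 2) • c
  have hg' : ∀ x ∈ univ, HasDerivWithinAt g (deriv f x - (x - a) • c) univ x := by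
    intro x _
    have hq : HasDerivAt (fun x : ℝ => (x - a) ^ 2 / 2) (x - a) x := by
      simpa using (((hasDerivAt_id x).sub_const a).pow 2).div_const 2
    exact ((hf x).hasDerivAt.sub (hq.smul_const c)).hasDerivWithinAt
  have hg'o : (fun x => deriv f x - (x - a) • c) =o[𝓝[univ] a] fun x => (x - a) ^ 1 := by
    simpa [h1] using hasDerivAt_iff_isLittleO.mp hf'.hasDerivAt
  have hg0 : g a = 0 := by simp [g, h0]
  have hgo : g =o[𝓝[≠] a] fun x => (x - a) ^ 2 := by
    simpa [hg0] using (Convex.isLittleO_pow_succ_real convex_univ (mem_univ a) hg' hg'o).mono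
      (nhdsWithin_mono a (subset_univ {a}ᶜ))
  have := hgo.tendsto_inv_smul_nhds_zero.add_const ((2 : ℝ)⁻¹ • c)
  rw [zero_add] at this
  refine this.congr' ?_
  filter_upwards [self_mem_nhdsWithin] with x hx
  have hx : x - a ≠ 0 := sub_ne_zero.mpr hx
  simp only [g, smul_sub, smul_smul]
  rw [show ((x - a) ^ 2)⁻¹ * ((x - a) ^ 2 / 2) = 2⁻¹ by field_simp, sub_add_cancel]

theorem deriv_cross_terms_eq_zero_of_det_eq_const {ψ φ ψb φb : ℝ → ℂ} {c : ℂ} {a : ℝ}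
    (hψ : DifferentiableAt ℝ ψ a) (hφ : DifferentiableAt ℝ φ a)
    (hψb : DifferentiableAt ℝ ψb a) (hφb : DifferentiableAt ℝ φb a)
    (hdet : ∀ x, ψ x * φb x - ψb x * φ x = c) :
    (ψ a * deriv φb a - ψb a * deriv φ a) + (deriv ψ a * φb a - deriv ψb a * φ a) = 0 := by
  have hconst : HasDerivAt (fun x => ψ x * φb x - ψb x * φ x) 0 a := by
    simpa only [hdet] using hasDerivAt_const a c
  have hprod := (hψ.hasDerivAt.mul hφb.hasDerivAt).sub (hψb.hasDerivAt.mul hφ.hasDerivAt)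
  linear_combination hprod.unique hconst

/-- The second connected correlator `W₂(x₁,x₂) = −K(x₁,x₂)K(x₂,x₁) − 1/(x₁−x₂)²`
has a finite limit at coinciding points. -/
theorem W2_no_pole_at_diagonal (ψ φ ψb φb : ℝ → ℂ)
    (hψ : ContDiff ℝ 2 ψ) (hφ : ContDiff ℝ 2 φ)
    (hψb : ContDiff ℝ 2 ψb) (hφb : ContDiff ℝ 2 φb)
    (hdet : ∀ x : ℝ, ψ x * φb x - ψb x * φ x = 1) (x₁ : ℝ) :
    ∃ w : ℂ, Tendsto (fun x₂ : ℝ =>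
        -((ψ x₁ * φb x₂ - ψb x₁ * φ x₂) / ((x₁ : ℂ) - (x₂ : ℂ)) *
            ((ψ x₂ * φb x₁ - ψb x₂ * φ x₁) / ((x₂ : ℂ) - (x₁ : ℂ)))) -
          1 / ((x₁ : ℂ) - (x₂ : ℂ)) ^ 2)
      (𝓝[≠] x₁) (𝓝 w) := by
  set F : ℝ → ℂ := fun x => ψ x₁ * φb x - ψb x₁ * φ x
  set G : ℝ → ℂ := fun x => ψ x * φb x₁ - ψb x * φ x₁
  set f : ℝ → ℂ := fun x => F x * G x - 1
  have hf : ContDiff ℝ 2 f := by fun_prop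
  have hdiff {u : ℝ → ℂ} (hu : ContDiff ℝ 2 u) : DifferentiableAt ℝ u x₁ :=
    hu.differentiable two_ne_zero x₁
  have hF : HasDerivAt F (ψ x₁ * deriv φb x₁ - ψb x₁ * deriv φ x₁) x₁ :=
    ((hdiff hφb).hasDerivAt.const_mul _).sub ((hdiff hφ).hasDerivAt.const_mul _)
  have hG : HasDerivAt G (deriv ψ x₁ * φb x₁ - deriv ψb x₁ * φ x₁) x₁ :=
    ((hdiff hψ).hasDerivAt.mul_const _).sub ((hdiff hψb).hasDerivAt.mul_const _)
  have hF₁ : F x₁ = 1 := hdet x₁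
  have hG₁ : G x₁ = 1 := hdet x₁
  have h0 : f x₁ = 0 := by simp [f, hF₁, hG₁]
  have h1 : deriv f x₁ = 0 := by
    rw [((hF.fun_mul hG).sub_const 1).deriv, hF₁, hG₁]
    linear_combination deriv_cross_terms_eq_zero_of_det_eq_const
      (hdiff hψ) (hdiff hφ) (hdiff hψb) (hdiff hφb) hdet
  refine ⟨_, (tendsto_inv_sq_smul_of_deriv_eq_zero (hf.differentiable two_ne_zero)
    (hf.differentiable_deriv_two x₁) h0 h1).congr' ?_⟩
  filter_upwards [self_mem_nhdsWithin] with x hx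
  have hx : (x : ℂ) - x₁ ≠ 0 := sub_ne_zero.mpr (by exact_mod_cast hx)
  have hx' : (x₁ : ℂ) - x ≠ 0 := by rwa [← neg_sub, neg_ne_zero]
  simp only [f, F, G, Complex.real_smul]
  push_cast
  field_simp
  ring
end
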